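/- arXiv:1210.5488 — 2 statements merged into one kernel-verified Lean document; each statement's English description precedes it below -/
import Mathlib

section
/- Let α = (α_1,…,α_N) ∈ ℂ^N and let (f,g) ∈ S̃(α). If all the roots of the characteristic polynomial of the mixed frame operator TU* are real, then FP(f,g) and ∑_{m=1}^N α_m are real numbers, and FP(f,g) ≥ (1/d)·(∑_{m=1}^N α_m)². -/
open scoped ComplexInnerProductSpace

/- `H` is a complex inner product space of finite dimension `d = Module.finrank ℂ H`.
The paper's inner product `⟨x, y⟩` is linear in the first argument, hence it corresponds to
Mathlib's `⟪y, x⟫ = inner y x` (Mathlib's inner product is linear in the second argument). -/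
variable {H : Type*} [NormedAddCommGroup H] [InnerProductSpace ℂ H] [FiniteDimensional ℂ H]

/-- The mixed frame operator `TU⋆ : x ↦ ∑ m, ⟨x, g m⟩ f m` (paper convention),
i.e. `x ↦ ∑ m, ⟪g m, x⟫ • f m` in Mathlib's convention. Note that `UT⋆` for the pair
`(f, g)` is then `mixedOp g f`. -/
noncomputable def mixedOp {N : ℕ} (f g : Fin N → H) : H →ₗ[ℂ] H where
  toFun x := ∑ m, (⟪g m, x⟫) • f m
  map_add' x y := by
    simp [inner_add_right, add_smul, Finset.sum_add_distrib]
  map_smul' c x := by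
    simp [inner_smul_right, mul_smul, Finset.smul_sum]

/-- The mixed frame potential `FP(f,g) = ∑ m, ∑ n, ⟨f m, g n⟩ * ⟨f n, g m⟩`
(paper convention: inner product linear in the first argument). -/
noncomputable def mixedFP {N : ℕ} (f g : Fin N → H) : ℂ :=
  ∑ m, ∑ n, ⟪g n, f m⟫ * ⟪g m, f n⟫

/-!
Let `λ₁, …, λ_d` be the roots of the characteristic polynomial of `T = TU*`. Then
`tr T = ∑ λᵢ`, and `tr T² = ∑ λᵢ²` because `χ_{T²}(z²) = ± χ_T(z) χ_T(-z)`. On the other hand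
`tr T = ∑ αₘ` and `tr T² = FP(f,g)`. When the `λᵢ` are real, both quantities are real and the
inequality is Cauchy–Schwarz, `(∑ λᵢ)² ≤ d ∑ λᵢ²`.
-/

open Polynomial

namespace Module.End

section CommRing

variable {R M : Type*} [CommRing R] [AddCommGroup M] [Module R M] [Module.Free R M]
  [Module.Finite R M]

theorem eval_sq_charpoly_sq (f : End R M) (z : R) :
    (f ^ 2).charpoly.eval (z ^ 2) =
      (-1) ^ finrank R M * f.charpoly.eval z * f.charpoly.eval (-z) := by
  have hneg : algebraMap R (End R M) z + f = (-1 : R) • (algebraMap R (End R M) (-z) - f) := by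
    simp [add_comm]
  rw [LinearMap.eval_charpoly, LinearMap.eval_charpoly, LinearMap.eval_charpoly, map_pow,
    (Algebra.commute_algebraMap_left z f).sq_sub_sq, map_mul, hneg, LinearMap.det_smul]
  ring

end CommRing

section IsAlgClosed

variable {K V : Type*} [Field K] [IsAlgClosed K] [AddCommGroup V] [Module K V]
  [FiniteDimensional K V]

theorem card_roots_charpoly (f : End K V) : Multiset.card f.charpoly.roots = finrank K V := by
  rw [IsAlgClosed.card_roots_eq_natDegree, LinearMap.charpoly_natDegree]

theorem charpoly_sq (f : End K V) :
    (f ^ 2).charpoly = ((f.charpoly.roots.map (· ^ 2)).map fun r ↦ X - C r).prod := by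
  set R := f.charpoly.roots
  have hf : f.charpoly = (R.map fun r ↦ X - C r).prod :=
    (IsAlgClosed.splits _).eq_prod_roots_of_monic f.charpoly_monic
  refine Polynomial.funext fun w ↦ ?_
  obtain ⟨z, rfl⟩ := IsAlgClosed.exists_pow_nat_eq w two_pos
  rw [eval_sq_charpoly_sq, hf, ← card_roots_charpoly f]
  simp only [eval_multiset_prod, Multiset.map_map, Function.comp_def, eval_sub, eval_X, eval_C]
  calc _ = (R.map fun x ↦ (-1) * ((z - x) * (-z - x))).prod := by
        rw [Multiset.prod_map_mul, Multiset.prod_map_mul, Multiset.map_const',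
          Multiset.prod_replicate, mul_assoc]
    _ = _ := congrArg _ <| Multiset.map_congr rfl fun x _ ↦ by ring

theorem trace_sq_eq_sum_sq_roots_charpoly (f : End K V) :
    LinearMap.trace K V (f ^ 2) = (f.charpoly.roots.map (· ^ 2)).sum := by
  rw [trace_eq_sum_roots_charpoly_of_splits (IsAlgClosed.splits _), charpoly_sq,
    roots_multiset_prod_X_sub_C]

end IsAlgClosed

end Module.End

theorem Multiset.sq_sum_le_card_mul_sum_sq {α : Type*} [Semiring α] [LinearOrder α]
    [IsStrictOrderedRing α] [ExistsAddOfLE α] (s : Multiset α) :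
    s.sum ^ 2 ≤ card s * (s.map (· ^ 2)).sum := by
  have h := _root_.sq_sum_le_card_mul_sum_sq (s := (Finset.univ : Finset s)) (f := ((↑) : s → α))
  rwa [Finset.card_univ, Multiset.card_coe, Finset.sum, Finset.sum, Multiset.map_univ_coe,
    Multiset.map_univ s (· ^ 2)] at h

theorem Multiset.sq_sum_div_card_le_sum_sq {α : Type*} [Field α] [LinearOrder α]
    [IsStrictOrderedRing α] (s : Multiset α) :
    s.sum ^ 2 / card s ≤ (s.map (· ^ 2)).sum := by
  refine div_le_of_le_mul₀ (Nat.cast_nonneg _) (sum_nonneg fun x hx ↦ ?_)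
    (mul_comm (card s : α) _ ▸ s.sq_sum_le_card_mul_sum_sq)
  obtain ⟨y, -, rfl⟩ := mem_map.1 hx
  exact sq_nonneg y

section MixedFrame

variable {E : Type*} [NormedAddCommGroup E] [InnerProductSpace ℂ E] {N : ℕ}

theorem mixedOp_eq_sum_smulRight (f g : Fin N → E) :
    mixedOp f g = ∑ m, (innerₛₗ ℂ (g m)).smulRight (f m) := by
  ext x
  simp [mixedOp]

theorem trace_mixedOp [FiniteDimensional ℂ E] (f g : Fin N → E) :
    LinearMap.trace ℂ E (mixedOp f g) = ∑ m, ⟪g m, f m⟫ := by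
  simp [mixedOp_eq_sum_smulRight]

theorem mul_mixedOp (A : Module.End ℂ E) (f g : Fin N → E) :
    A * mixedOp f g = mixedOp (fun m ↦ A (f m)) g := by
  ext x
  simp [mixedOp]

theorem mixedFP_eq_trace_sq [FiniteDimensional ℂ E] (f g : Fin N → E) :
    mixedFP f g = LinearMap.trace ℂ E (mixedOp f g ^ 2) := by
  rw [sq, mul_mixedOp, trace_mixedOp, mixedFP]
  refine Finset.sum_congr rfl fun m _ ↦ ?_
  simp [mixedOp, mul_comm]

end MixedFrame

theorem mixedFP_lower_bound_of_real_eigenvalues_general {N : ℕ}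
    (α : Fin N → ℂ) (f g : Fin N → H) (hS : ∀ m, ⟪g m, f m⟫ = α m)
    (hroots : ∀ z ∈ (LinearMap.charpoly (mixedOp f g)).roots, z.im = 0) :
    (mixedFP f g).im = 0 ∧ (∑ m, α m).im = 0 ∧
    (1 / (Module.finrank ℂ H : ℝ)) * ((∑ m, α m).re) ^ 2 ≤ (mixedFP f g).re := by
  lift (mixedOp f g).charpoly.roots to Multiset ℝ using hroots with t ht
  have hsum : ∑ m, α m = (t.sum : ℂ) := by
    rw [← Finset.sum_congr rfl fun m _ ↦ hS m, ← trace_mixedOp,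
      Module.End.trace_eq_sum_roots_charpoly_of_splits (IsAlgClosed.splits _), ← ht]
    exact (map_multiset_sum Complex.ofRealHom t).symm
  have hFP : mixedFP f g = (((t.map (· ^ 2)).sum : ℝ) : ℂ) := by
    rw [mixedFP_eq_trace_sq, Module.End.trace_sq_eq_sum_sq_roots_charpoly, ← ht,
      ← Complex.ofRealHom_eq_coe, map_multiset_sum, Multiset.map_map, Multiset.map_map]
    simp
  have hcard : Multiset.card t = Module.finrank ℂ H := by
    rw [← Multiset.card_map, ht, Module.End.card_roots_charpoly]
  refine ⟨by simp [hFP], by simp [hsum], ?_⟩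
  rw [hFP, hsum, Complex.ofReal_re, Complex.ofReal_re, one_div_mul_eq_div, ← hcard]
  exact t.sq_sum_div_card_le_sum_sq

/-- if all eigenvalues of `TU⋆` (roots of its characteristic polynomial) are
real, then `FP(f,g)` and `∑ α m` are real, and `FP(f,g) ≥ (1/d) (∑ α m)²`. -/
theorem mixedFP_lower_bound_of_real_eigenvalues {N : ℕ} (hd : 1 ≤ Module.finrank ℂ H)
    (α : Fin N → ℂ) (f g : Fin N → H) (hS : ∀ m, ⟪g m, f m⟫ = α m)
    (hroots : ∀ z ∈ (LinearMap.charpoly (mixedOp f g)).roots, z.im = 0) :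
    (mixedFP f g).im = 0 ∧ (∑ m, α m).im = 0 ∧
    (1 / (Module.finrank ℂ H : ℝ)) * ((∑ m, α m).re) ^ 2 ≤ (mixedFP f g).re :=
  mixedFP_lower_bound_of_real_eigenvalues_general α f g hS hroots
end

section
/- Let α = (α_1,…,α_N) ∈ ℂ^N and let (f,g) ∈ S̃(α) be a critical pair of sequences. For λ ∈ ℂ define I_λ = {m ∈ {1,…,N} : TU*(f_m) = λ·f_m and UT*(g_m) = conj(λ)·g_m}. Then every index m ∈ {1,…,N} belongs to I_λ for some λ ∈ ℂ, and for every λ ∈ ℂ the families {f_m}_{m∈I_λ} and {g_m}_{m∈I_λ} are λ-generalized dual frames, i.e. ∑_{m∈I_λ} ⟨x, g_m⟩ f_m = λ·x for all x in span{f_m : m ∈ I_λ} and ∑_{m∈I_λ} ⟨x, f_m⟩ g_m = conj(λ)·x for all x in span{g_m : m ∈ I_λ}. -/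
/-!
By criticality, `TU* f_m = (c_m + ⟨f_m, g_m⟩) f_m` and `UT* g_m = conj (c_m + ⟨f_m, g_m⟩) g_m`,
so every index lies in some `I_λ`. As `UT*` is the adjoint of `TU*`, eigenvectors for distinct
eigenvalues are orthogonal: `⟨f_k, g_m⟩ = 0` whenever `k ∈ I_λ` and `m ∈ I_μ` with `μ ≠ λ`.
Hence on `f_k`, `k ∈ I_λ`, the sum over `I_λ` is all of `TU* f_k = λ f_k`, and linearity extends
this to the span. The statement for the `g_m` is the same one for the pair `(g, f)` and `conj λ`.
-/

open scoped ComplexInnerProductSpace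

/- `H` is a complex inner product space of finite dimension `d = Module.finrank ℂ H`.
The paper's inner product `⟨x, y⟩` is linear in the first argument, hence it corresponds to
Mathlib's `⟪y, x⟫ = inner y x` (Mathlib's inner product is linear in the second argument). -/
variable {H : Type*} [NormedAddCommGroup H] [InnerProductSpace ℂ H] [FiniteDimensional ℂ H]

section

open scoped InnerProductSpace

variable {𝕜 E : Type*} [RCLike 𝕜] [NormedAddCommGroup E] [InnerProductSpace 𝕜 E]

theorem inner_eq_zero_of_eigenvectors_of_adjoint {T S : E →ₗ[𝕜] E}
    (hTS : ∀ x y, ⟪S y, x⟫_𝕜 = ⟪y, T x⟫_𝕜) {x y : E} {a b : 𝕜}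
    (hx : T x = a • x) (hy : S y = starRingEnd 𝕜 b • y) (hab : a ≠ b) : ⟪y, x⟫_𝕜 = 0 := by
  have h := hTS x y
  rw [hx, hy, inner_smul_left, inner_smul_right, RCLike.conj_conj] at h
  have hprod : (b - a) * ⟪y, x⟫_𝕜 = 0 := by linear_combination h
  exact (mul_eq_zero.mp hprod).resolve_left (sub_ne_zero.mpr hab.symm)

theorem sum_inner_smul_eq_smul_of_mem_span {ι : Type*} (s : Finset ι) (u v : ι → E) (c : 𝕜)
    {S : Set E} (hS : ∀ y ∈ S, ∑ m ∈ s, ⟪v m, y⟫_𝕜 • u m = c • y) {x : E}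
    (hx : x ∈ Submodule.span 𝕜 S) : ∑ m ∈ s, ⟪v m, x⟫_𝕜 • u m = c • x := by
  induction hx using Submodule.span_induction with
  | mem y hy => exact hS y hy
  | zero => simp
  | add y z _ _ hy hz =>
    simp only [inner_add_right, add_smul, Finset.sum_add_distrib, hy, hz, smul_add]
  | smul a y _ hy =>
    simp only [inner_smul_right, mul_smul, ← Finset.smul_sum, hy, smul_comm a c y]

end

section

variable {E : Type*} [NormedAddCommGroup E] [InnerProductSpace ℂ E] {N : ℕ}

theorem mixedOp_apply (f g : Fin N → E) (x : E) : mixedOp f g x = ∑ m, ⟪g m, x⟫ • f m := rfl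

theorem inner_mixedOp_swap (f g : Fin N → E) (x y : E) :
    ⟪mixedOp g f y, x⟫ = ⟪y, mixedOp f g x⟫ := by
  simp only [mixedOp_apply, sum_inner, inner_sum, inner_smul_left, inner_smul_right,
    inner_conj_symm, mul_comm]

theorem mixedOp_apply_self (f g : Fin N → E) (m : Fin N) :
    mixedOp f g (f m) = ∑ n ∈ Finset.univ.erase m, ⟪g n, f m⟫ • f n + ⟪g m, f m⟫ • f m :=
  (Finset.sum_erase_add _ _ (Finset.mem_univ m)).symm

/-- `m ∈ I_λ` in the paper's notation. An `abbrev`, so that the classical `Decidable` instance of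
`Finset.filter (IsEigenIndex f g lam)` is the one of the unfolded conjunction. -/
abbrev IsEigenIndex (f g : Fin N → E) (lam : ℂ) (m : Fin N) : Prop :=
  mixedOp f g (f m) = lam • f m ∧ mixedOp g f (g m) = starRingEnd ℂ lam • g m

variable {f g : Fin N → E}

theorem isEigenIndex_swap {lam : ℂ} {m : Fin N} :
    IsEigenIndex g f (starRingEnd ℂ lam) m ↔ IsEigenIndex f g lam m := by
  rw [IsEigenIndex, IsEigenIndex, Complex.conj_conj, and_comm]

theorem exists_isEigenIndex_of_critical
    (hcrit : ∀ m : Fin N, ∃ c : ℂ,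
      ∑ n ∈ Finset.univ.erase m, ⟪g n, f m⟫ • f n = c • f m ∧
      ∑ n ∈ Finset.univ.erase m, ⟪f n, g m⟫ • g n = starRingEnd ℂ c • g m)
    (m : Fin N) : ∃ lam, IsEigenIndex f g lam m := by
  obtain ⟨c, hf, hg⟩ := hcrit m
  refine ⟨c + ⟪g m, f m⟫, ?_, ?_⟩
  · rw [mixedOp_apply_self, hf, add_smul]
  · rw [mixedOp_apply_self, hg, map_add, inner_conj_symm, add_smul]

theorem inner_eq_zero_of_isEigenIndex {μ lam : ℂ} {m k : Fin N} (hm : IsEigenIndex f g μ m)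
    (hk : IsEigenIndex f g lam k) (hne : μ ≠ lam) : ⟪g m, f k⟫ = 0 :=
  inner_eq_zero_of_eigenvectors_of_adjoint (inner_mixedOp_swap f g) hk.1 hm.2 hne.symm

open Classical in
theorem sum_filter_isEigenIndex_inner_smul_eq_smul (hall : ∀ m, ∃ μ, IsEigenIndex f g μ m) (lam : ℂ)
    {x : E} (hx : x ∈ Submodule.span ℂ (f '' {m | IsEigenIndex f g lam m})) :
    ∑ m ∈ Finset.univ.filter (IsEigenIndex f g lam), ⟪g m, x⟫ • f m = lam • x := by
  refine sum_inner_smul_eq_smul_of_mem_span _ f g lam ?_ hx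
  rintro _ ⟨k, hk, rfl⟩
  rw [Finset.sum_filter_of_ne, ← mixedOp_apply, hk.1]
  intro m _ hne
  obtain ⟨μ, hm⟩ := hall m
  obtain rfl : μ = lam := by_contra fun hμ =>
    hne (by rw [inner_eq_zero_of_isEigenIndex hm hk hμ, zero_smul])
  exact hm

end

open Classical in
theorem critical_pair_generalized_dual_frames_general {N : ℕ}
    (f g : Fin N → H)
    (hcrit : ∀ m : Fin N, ∃ c : ℂ,
      ∑ n ∈ Finset.univ.erase m, (⟪g n, f m⟫) • f n = c • f m ∧
      ∑ n ∈ Finset.univ.erase m, (⟪f n, g m⟫) • g n = (starRingEnd ℂ c) • g m) :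
    (∀ m : Fin N, ∃ lam : ℂ,
      mixedOp f g (f m) = lam • f m ∧ mixedOp g f (g m) = (starRingEnd ℂ lam) • g m) ∧
    (∀ lam : ℂ,
      (∀ x ∈ Submodule.span ℂ (f '' {m | mixedOp f g (f m) = lam • f m ∧
          mixedOp g f (g m) = (starRingEnd ℂ lam) • g m}),
        ∑ m ∈ Finset.univ.filter (fun m => mixedOp f g (f m) = lam • f m ∧
            mixedOp g f (g m) = (starRingEnd ℂ lam) • g m),
          (⟪g m, x⟫) • f m = lam • x) ∧
      (∀ x ∈ Submodule.span ℂ (g '' {m | mixedOp f g (f m) = lam • f m ∧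
          mixedOp g f (g m) = (starRingEnd ℂ lam) • g m}),
        ∑ m ∈ Finset.univ.filter (fun m => mixedOp f g (f m) = lam • f m ∧
            mixedOp g f (g m) = (starRingEnd ℂ lam) • g m),
          (⟪f m, x⟫) • g m = (starRingEnd ℂ lam) • x)) := by
  have hall := exists_isEigenIndex_of_critical hcrit
  have hall' : ∀ m, ∃ μ, IsEigenIndex g f μ m := fun m =>
    let ⟨_, hμ⟩ := hall m; ⟨_, isEigenIndex_swap.mpr hμ⟩
  refine ⟨hall, fun lam => ⟨fun x hx => ?_, fun x hx => ?_⟩⟩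
  · exact sum_filter_isEigenIndex_inner_smul_eq_smul hall lam hx
  · have hswap := sum_filter_isEigenIndex_inner_smul_eq_smul hall' (starRingEnd ℂ lam) (x := x)
    simp only [isEigenIndex_swap] at hswap
    exact hswap hx

open Classical in
/-- for a critical pair `(f,g) ∈ S̃(α)`, every index belongs to some
`I_λ = {m : TU⋆ (f m) = λ • f m ∧ UT⋆ (g m) = conj λ • g m}`, and for every `λ ∈ ℂ`
the families `{f m}_{m ∈ I_λ}` and `{g m}_{m ∈ I_λ}` are `λ`-generalized dual frames. -/
theorem critical_pair_generalized_dual_frames {N : ℕ} (hd : 1 ≤ Module.finrank ℂ H)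
    (α : Fin N → ℂ) (f g : Fin N → H) (hS : ∀ m, ⟪g m, f m⟫ = α m)
    (hcrit : ∀ m : Fin N, ∃ c : ℂ,
      ∑ n ∈ Finset.univ.erase m, (⟪g n, f m⟫) • f n = c • f m ∧
      ∑ n ∈ Finset.univ.erase m, (⟪f n, g m⟫) • g n = (starRingEnd ℂ c) • g m) :
    (∀ m : Fin N, ∃ lam : ℂ,
      mixedOp f g (f m) = lam • f m ∧ mixedOp g f (g m) = (starRingEnd ℂ lam) • g m) ∧
    (∀ lam : ℂ,
      (∀ x ∈ Submodule.span ℂ (f '' {m | mixedOp f g (f m) = lam • f m ∧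
          mixedOp g f (g m) = (starRingEnd ℂ lam) • g m}),
        ∑ m ∈ Finset.univ.filter (fun m => mixedOp f g (f m) = lam • f m ∧
            mixedOp g f (g m) = (starRingEnd ℂ lam) • g m),
          (⟪g m, x⟫) • f m = lam • x) ∧
      (∀ x ∈ Submodule.span ℂ (g '' {m | mixedOp f g (f m) = lam • f m ∧
          mixedOp g f (g m) = (starRingEnd ℂ lam) • g m}),
        ∑ m ∈ Finset.univ.filter (fun m => mixedOp f g (f m) = lam • f m ∧
            mixedOp g f (g m) = (starRingEnd ℂ lam) • g m),
          (⟪f m, x⟫) • g m = (starRingEnd ℂ lam) • x)) :=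
  critical_pair_generalized_dual_frames_general f g hcrit
end
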